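/- arXiv:2108.03034 — 2 statements merged into one kernel-verified Lean document; each statement's English description precedes it below -/
import Mathlib

section
/- Let E be a real inner product space, let u₁ and u₂ be unit vectors with ⟪u₁, u₂⟫ = cos θ for some θ with 0 < θ < π/2, let d > 0, and set a = d•u₁ and c = d•u₂. Then for every r ≥ 0, the triple intersection closedBall(0, r) ∩ closedBall(a, r) ∩ closedBall(c, r) is nonempty if and only if r ≥ d/(2·cos(θ/2)). (The quantity d/(2·cos(θ/2)) is the circumradius of the isoceles triangle with apex at the origin, apex angle θ, and equal sides of length d.) -/
open scoped RealInnerProductSpace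

set_option maxHeartbeats 1600000 in
/-- Let `u₁, u₂` be unit vectors in a real inner product space with
`⟪u₁, u₂⟫ = cos θ` for some `0 < θ < π/2`, let `d > 0`, and set `a = d • u₁`,
`c = d • u₂`. Then for every `r ≥ 0`, the triple intersection of the closed
`r`-balls centered at `0`, `a`, `c` is nonempty iff `r ≥ d / (2 · cos (θ/2))`. -/
theorem triple_ball_inter_nonempty_iff_circumradius
    {E : Type*} [NormedAddCommGroup E] [InnerProductSpace ℝ E]
    (u₁ u₂ : E) (hu₁ : ‖u₁‖ = 1) (hu₂ : ‖u₂‖ = 1)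
    (θ : ℝ) (hθ₀ : 0 < θ) (hθ₁ : θ < Real.pi / 2)
    (hangle : ⟪u₁, u₂⟫ = Real.cos θ)
    (d : ℝ) (hd : 0 < d)
    (a c : E) (ha : a = d • u₁) (hc : c = d • u₂) :
    ∀ r : ℝ, 0 ≤ r →
      ((Metric.closedBall (0 : E) r ∩ Metric.closedBall a r ∩
          Metric.closedBall c r).Nonempty ↔
        r ≥ d / (2 * Real.cos (θ / 2))) := by
  subst ha hc
  intro r hr
  have hπ := Real.pi_pos
  have hcθ : 0 < Real.cos θ := Real.cos_pos_of_mem_Ioo ⟨by linarith, hθ₁⟩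
  have hch : 0 < Real.cos (θ / 2) :=
    Real.cos_pos_of_mem_Ioo ⟨by linarith, by linarith⟩
  have hsqh : Real.cos (θ / 2) ^ 2 = 1 / 2 + Real.cos θ / 2 := by
    have h := Real.cos_sq (θ / 2)
    rwa [show 2 * (θ / 2) = θ by ring] at h
  set s2 : ℝ := 2 + 2 * Real.cos θ with hs2def
  have hs2 : 0 < s2 := by positivity
  have hs2eq : s2 = 4 * Real.cos (θ / 2) ^ 2 := by rw [hsqh]; ring
  set R : ℝ := d / (2 * Real.cos (θ / 2)) with hRdef
  have hR : 0 < R := by positivity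
  have hRsq : R ^ 2 * s2 = d ^ 2 := by
    rw [hs2eq, hRdef]; field_simp; ring
  have h11 : ⟪u₁, u₁⟫ = 1 := by
    simp [real_inner_self_eq_norm_mul_norm, hu₁]
  have h22 : ⟪u₂, u₂⟫ = 1 := by
    simp [real_inner_self_eq_norm_mul_norm, hu₂]
  have h21 : ⟪u₂, u₁⟫ = Real.cos θ := by rw [real_inner_comm]; exact hangle
  have sqle : ∀ t : ℝ, 0 ≤ t → t ^ 2 ≤ r ^ 2 → t ≤ r := by
    intro t ht h2; nlinarith
  set p : E := (d / s2) • (u₁ + u₂) with hpdef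
  have hp2 : ‖p‖ ^ 2 * s2 = d ^ 2 := by
    rw [hpdef, ← real_inner_self_eq_norm_sq]
    simp only [inner_smul_left, inner_smul_right, inner_add_left, inner_add_right,
      h11, h22, hangle, h21, RCLike.conj_to_real]
    field_simp
    ring
  have hpa : ‖p - d • u₁‖ ^ 2 * s2 = d ^ 2 := by
    rw [← real_inner_self_eq_norm_sq]
    simp only [hpdef, inner_sub_left, inner_sub_right, inner_smul_left,
      inner_smul_right, inner_add_left, inner_add_right,
      h11, h22, hangle, h21, RCLike.conj_to_real]
    field_simp
    ring
  have hpc : ‖p - d • u₂‖ ^ 2 * s2 = d ^ 2 := by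
    rw [← real_inner_self_eq_norm_sq]
    simp only [hpdef, inner_sub_left, inner_sub_right, inner_smul_left,
      inner_smul_right, inner_add_left, inner_add_right,
      h11, h22, hangle, h21, RCLike.conj_to_real]
    field_simp
    ring
  constructor
  · rintro ⟨x, ⟨hx0, hxa⟩, hxc⟩
    rw [Metric.mem_closedBall, dist_eq_norm, sub_zero] at hx0
    rw [Metric.mem_closedBall, dist_eq_norm] at hxa hxc
    have e0 : ⟪x, x⟫ ≤ r ^ 2 := by
      rw [real_inner_self_eq_norm_sq]
      exact pow_le_pow_left₀ (norm_nonneg x) hx0 2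
    have ea : ⟪x, x⟫ - 2 * (d * ⟪x, u₁⟫) + d ^ 2 ≤ r ^ 2 := by
      have h := pow_le_pow_left₀ (norm_nonneg _) hxa 2
      rw [norm_sub_sq_real, ← real_inner_self_eq_norm_sq,
        ← real_inner_self_eq_norm_sq, inner_smul_right, inner_smul_left,
        inner_smul_right, h11, RCLike.conj_to_real] at h
      nlinarith [h]
    have ec : ⟪x, x⟫ - 2 * (d * ⟪x, u₂⟫) + d ^ 2 ≤ r ^ 2 := by
      have h := pow_le_pow_left₀ (norm_nonneg _) hxc 2
      rw [norm_sub_sq_real, ← real_inner_self_eq_norm_sq,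
        ← real_inner_self_eq_norm_sq, inner_smul_right, inner_smul_left,
        inner_smul_right, h22, RCLike.conj_to_real] at h
      nlinarith [h]
    have hexp : ‖x - p‖ ^ 2 * s2 =
        s2 * ⟪x, x⟫ - 2 * d * (⟪x, u₁⟫ + ⟪x, u₂⟫) + d ^ 2 := by
      rw [norm_sub_sq_real, ← real_inner_self_eq_norm_sq,
        ← real_inner_self_eq_norm_sq, hpdef]
      simp only [inner_smul_left, inner_smul_right, inner_add_left,
        inner_add_right, h11, h22, hangle, h21, RCLike.conj_to_real]
      field_simp
      ring
    have key : (0 : ℝ) ≤ s2 * ⟪x, x⟫ - 2 * d * (⟪x, u₁⟫ + ⟪x, u₂⟫) + d ^ 2 := by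
      rw [← hexp]
      positivity
    have hmul : (s2 - 2) * ⟪x, x⟫ ≤ (s2 - 2) * r ^ 2 :=
      mul_le_mul_of_nonneg_left e0 (by simp only [hs2def]; linarith)
    have hfin : d ^ 2 ≤ s2 * r ^ 2 := by nlinarith [ea, ec, key, hmul]
    have : R ^ 2 ≤ r ^ 2 := by
      have := hRsq
      nlinarith [hfin, hs2]
    exact sqle R hR.le this
  · intro hrR
    have hRr : R ≤ r := hrR
    have hRr2 : R ^ 2 ≤ r ^ 2 := by nlinarith [hRr, hR]
    refine ⟨p, ⟨?_, ?_⟩, ?_⟩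
    · rw [Metric.mem_closedBall, dist_eq_norm, sub_zero]
      refine sqle _ (norm_nonneg _) ?_
      have h := mul_right_cancel₀ hs2.ne' (hp2.trans hRsq.symm)
      linarith
    · rw [Metric.mem_closedBall, dist_eq_norm]
      refine sqle _ (norm_nonneg _) ?_
      have h := mul_right_cancel₀ hs2.ne' (hpa.trans hRsq.symm)
      linarith
    · rw [Metric.mem_closedBall, dist_eq_norm]
      refine sqle _ (norm_nonneg _) ?_
      have h := mul_right_cancel₀ hs2.ne' (hpc.trans hRsq.symm)
      linarith
end

section
/- Let E be a real inner product space, let u₁ and u₂ be unit vectors with ⟪u₁, u₂⟫ = cos θ for some θ with 0 < θ ≤ π/3, let d > 0, and set a = d•u₁ and c = d•u₂. Then d/2 < d/(2·cos(θ/2)), and for every r with d/2 ≤ r < d/(2·cos(θ/2)) the three pairwise intersections closedBall(0, r) ∩ closedBall(a, r), closedBall(0, r) ∩ closedBall(c, r), and closedBall(a, r) ∩ closedBall(c, r) are all nonempty, while the triple intersection closedBall(0, r) ∩ closedBall(a, r) ∩ closedBall(c, r) is empty. -/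
/-!
The triangle `0, a, c` is isosceles with legs `d` and apex angle `θ ≤ π/3`, so its base
`‖a - c‖ = 2d sin (θ/2)` is at most `d`: every side has length at most `2r`, so its midpoint
lies in both balls. For the triple intersection, a point `x` within `r` of all three vertices
satisfies `‖x - a‖² + ‖x - c‖² ≤ 2r²`; expanding and applying Cauchy–Schwarz to `⟪x, a + c⟫`
with `‖a + c‖ = 2d cos (θ/2)` forces `r ≥ d / (2 cos (θ/2))`, the circumradius.
-/

open scoped RealInnerProductSpace
open Metric Real

theorem closedBall_inter_closedBall_nonempty_of_dist_le {E : Type*} [NormedAddCommGroup E]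
    [NormedSpace ℝ E] {y z : E} {r : ℝ} (h : dist y z ≤ 2 * r) :
    (closedBall y r ∩ closedBall z r).Nonempty := by
  refine ⟨midpoint ℝ y z, ?_, ?_⟩ <;>
    simp only [mem_closedBall, dist_midpoint_left, dist_midpoint_right, Real.norm_two] <;>
    linarith

section InnerProductSpace

variable {E : Type*} [NormedAddCommGroup E] [InnerProductSpace ℝ E]

theorem closedBall_zero_inter_closedBall_inter_closedBall_eq_empty {a c : E} {r : ℝ}
    (h2r : 2 * r ≤ ‖a + c‖) (hr : 2 * r * ‖a + c‖ < ‖a‖ ^ 2 + ‖c‖ ^ 2) :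
    closedBall 0 r ∩ closedBall a r ∩ closedBall c r = ∅ := by
  refine Set.eq_empty_iff_forall_notMem.2 fun x ⟨⟨hx, hxa⟩, hxc⟩ => ?_
  rw [mem_closedBall_zero_iff] at hx
  rw [mem_closedBall, dist_eq_norm] at hxa hxc
  have hsum : ‖x - a‖ ^ 2 + ‖x - c‖ ^ 2 = 2 * ‖x‖ ^ 2 - 2 * ⟪x, a + c⟫ + ‖a‖ ^ 2 + ‖c‖ ^ 2 := by
    rw [norm_sub_sq_real, norm_sub_sq_real, inner_add_right]; ring
  have hcs : ⟪x, a + c⟫ ≤ ‖x‖ * ‖a + c‖ := real_inner_le_norm x (a + c)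
  have hxa' := pow_le_pow_left₀ (norm_nonneg _) hxa 2
  have hxc' := pow_le_pow_left₀ (norm_nonneg _) hxc 2
  -- with `s = ‖x‖ ≤ r`, this gives `(r - s) (r + s - ‖a + c‖) > 0`, impossible as `r + s ≤ 2 r`
  nlinarith [norm_nonneg x]

theorem norm_add_eq_two_mul_cos_half {u₁ u₂ : E} (hu₁ : ‖u₁‖ = 1) (hu₂ : ‖u₂‖ = 1) {θ : ℝ}
    (hθ₀ : -π ≤ θ) (hθ₁ : θ ≤ π) (hangle : ⟪u₁, u₂⟫ = cos θ) :
    ‖u₁ + u₂‖ = 2 * cos (θ / 2) := by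
  have hcos : 0 ≤ cos (θ / 2) := cos_nonneg_of_mem_Icc ⟨by linarith, by linarith⟩
  refine (sq_eq_sq₀ (norm_nonneg _) (by positivity)).1 ?_
  rw [norm_add_sq_real, hu₁, hu₂, hangle, mul_pow, cos_sq, mul_div_cancel₀ θ two_ne_zero]
  ring

theorem norm_sub_sq_eq_two_sub_two_mul_cos {u₁ u₂ : E} (hu₁ : ‖u₁‖ = 1) (hu₂ : ‖u₂‖ = 1) {θ : ℝ}
    (hangle : ⟪u₁, u₂⟫ = cos θ) :
    ‖u₁ - u₂‖ ^ 2 = 2 - 2 * cos θ := by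
  rw [norm_sub_sq_real, hu₁, hu₂, hangle]; ring

end InnerProductSpace

/-- Let `u₁, u₂` be unit vectors in a real inner product space with
`⟪u₁, u₂⟫ = cos θ` for some `0 < θ ≤ π/3`, let `d > 0`, and set `a = d • u₁`,
`c = d • u₂`. Then `d/2 < d / (2 · cos (θ/2))`, and for every radius `r` with
`d/2 ≤ r < d / (2 · cos (θ/2))` the three pairwise intersections of the closed
`r`-balls centered at `0`, `a`, `c` are nonempty while their triple
intersection is empty. -/
theorem pairwise_inter_nonempty_triple_inter_empty
    {E : Type*} [NormedAddCommGroup E] [InnerProductSpace ℝ E]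
    (u₁ u₂ : E) (hu₁ : ‖u₁‖ = 1) (hu₂ : ‖u₂‖ = 1)
    (θ : ℝ) (hθ₀ : 0 < θ) (hθ₁ : θ ≤ Real.pi / 3)
    (hangle : ⟪u₁, u₂⟫ = Real.cos θ)
    (d : ℝ) (hd : 0 < d)
    (a c : E) (ha : a = d • u₁) (hc : c = d • u₂) :
    d / 2 < d / (2 * Real.cos (θ / 2)) ∧
    ∀ r : ℝ, d / 2 ≤ r → r < d / (2 * Real.cos (θ / 2)) →
      (Metric.closedBall (0 : E) r ∩ Metric.closedBall a r).Nonempty ∧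
      (Metric.closedBall (0 : E) r ∩ Metric.closedBall c r).Nonempty ∧
      (Metric.closedBall a r ∩ Metric.closedBall c r).Nonempty ∧
      (Metric.closedBall (0 : E) r ∩ Metric.closedBall a r ∩
        Metric.closedBall c r) = ∅ := by
  subst ha hc
  have hπ := pi_pos
  have hcos : 1 / 2 ≤ cos θ := by
    simpa [cos_pi_div_three] using cos_le_cos_of_nonneg_of_le_pi hθ₀.le (by linarith) hθ₁
  have hhalf_pos : 0 < cos (θ / 2) := cos_pos_of_mem_Ioo ⟨by linarith, by linarith⟩
  have hhalf_lt_one : cos (θ / 2) < 1 := by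
    simpa using cos_lt_cos_of_nonneg_of_le_pi le_rfl (by linarith) (half_pos hθ₀)
  have hhalf_sq : cos (θ / 2) ^ 2 = 1 / 2 + cos θ / 2 := by
    rw [cos_sq, mul_div_cancel₀ θ two_ne_zero]
  refine ⟨div_lt_div_of_pos_left hd (by positivity) (by linarith), fun r hr₁ hr₂ => ?_⟩
  have hdr : 2 * cos (θ / 2) * r < d := (lt_div_iff₀' (by positivity)).1 hr₂
  have hnorm : ∀ u : E, ‖u‖ = 1 → ‖d • u‖ = d := fun u hu => by
    rw [norm_smul, hu, mul_one, norm_of_nonneg hd.le]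
  have hsub : ‖d • u₁ - d • u₂‖ ≤ d := by
    have : ‖u₁ - u₂‖ ^ 2 ≤ 1 := by
      rw [norm_sub_sq_eq_two_sub_two_mul_cos hu₁ hu₂ hangle]; linarith
    rw [← smul_sub, norm_smul, norm_of_nonneg hd.le]
    exact mul_le_of_le_one_right hd.le (sq_le_one_iff₀ (norm_nonneg _) |>.1 this)
  have hadd : ‖d • u₁ + d • u₂‖ = 2 * d * cos (θ / 2) := by
    rw [← smul_add, norm_smul, norm_of_nonneg hd.le,
      norm_add_eq_two_mul_cos_half hu₁ hu₂ (by linarith) (by linarith) hangle]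
    ring
  refine ⟨closedBall_inter_closedBall_nonempty_of_dist_le ?_,
    closedBall_inter_closedBall_nonempty_of_dist_le ?_,
    closedBall_inter_closedBall_nonempty_of_dist_le ?_,
    closedBall_zero_inter_closedBall_inter_closedBall_eq_empty ?_ ?_⟩
  · rw [dist_zero_left, hnorm u₁ hu₁]; linarith
  · rw [dist_zero_left, hnorm u₂ hu₂]; linarith
  · rw [dist_eq_norm]; linarith
  · rw [hadd]; nlinarith
  · rw [hadd, hnorm u₁ hu₁, hnorm u₂ hu₂]; nlinarith
end
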